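/- arXiv:2306.07477 — 3 statements merged into one kernel-verified Lean document; each statement's English description precedes it below -/
import Mathlib

section
/- Let n ≥ 3 be an integer, r₁ > 0, and let f : [0, r₁) → ℝ be a twice continuously differentiable positive function with f(0) = 1 and f'(0) = 0. Suppose that for every r ∈ (0, r₁) one has (n-3) f(r) f'(r)/r + (1/2)(f^2)''(r) + (n-2)(1 - f(r)^2)/r^2 ≥ 0. Then for every r ∈ (0, r₁) the differential inequality (f(r)^2 - 1)/r^2 - f(r) f'(r)/r ≤ 0 holds. -/
/-- Case 1 of Lemma 2.1: for `n ≥ 3` and a positive `C²` function `f` on `[0, r₁)`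
with `f(0) = 1` and `f'(0) = 0`, the null convergence condition
`(n-3) f f'/r + (1/2)(f²)'' + (n-2)(1-f²)/r² ≥ 0` on `(0, r₁)` implies the
differential inequality `(f² - 1)/r² - f f'/r ≤ 0` on `(0, r₁)`. -/
theorem ncc_implies_differential_inequality_case_one
    (n : ℕ) (hn : 3 ≤ n) (r₁ : ℝ) (hr₁ : 0 < r₁)
    (f f' f'' : ℝ → ℝ)
    (hf : ∀ r ∈ Set.Ico (0 : ℝ) r₁, HasDerivWithinAt f (f' r) (Set.Ico 0 r₁) r)
    (hf' : ∀ r ∈ Set.Ico (0 : ℝ) r₁, HasDerivWithinAt f' (f'' r) (Set.Ico 0 r₁) r)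
    (hf''cont : ContinuousOn f'' (Set.Ico 0 r₁))
    (hpos : ∀ r ∈ Set.Ico (0 : ℝ) r₁, 0 < f r)
    (hf0 : f 0 = 1) (hf'0 : f' 0 = 0)
    (hNCC : ∀ r ∈ Set.Ioo (0 : ℝ) r₁,
      0 ≤ ((n : ℝ) - 3) * f r * f' r / r
          + (1 / 2) * deriv (deriv (fun s : ℝ => f s ^ 2)) r
          + ((n : ℝ) - 2) * (1 - f r ^ 2) / r ^ 2) :
    ∀ r ∈ Set.Ioo (0 : ℝ) r₁,
      (f r ^ 2 - 1) / r ^ 2 - f r * f' r / r ≤ 0 := by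
  obtain ⟨m, rfl⟩ : ∃ m, n = m + 3 := ⟨n - 3, by omega⟩
  set ψ : ℝ → ℝ := fun s => s ^ (m + 1) * (2 * s * f s * f' s - 2 * f s ^ 2 + 2) with hψdef
  have hmem : ∀ r ∈ Set.Ioo (0 : ℝ) r₁, Set.Ico (0:ℝ) r₁ ∈ nhds r := by
    intro r hr; exact Ico_mem_nhds hr.1 hr.2
  have hA : ∀ r ∈ Set.Ioo (0 : ℝ) r₁, HasDerivAt f (f' r) r := by
    intro r hr; exact (hf r ⟨hr.1.le, hr.2⟩).hasDerivAt (hmem r hr)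
  have hB : ∀ r ∈ Set.Ioo (0 : ℝ) r₁, HasDerivAt f' (f'' r) r := by
    intro r hr; exact (hf' r ⟨hr.1.le, hr.2⟩).hasDerivAt (hmem r hr)
  have hd2 : ∀ r ∈ Set.Ioo (0 : ℝ) r₁,
      deriv (deriv (fun s : ℝ => f s ^ 2)) r = 2 * (f' r ^ 2 + f r * f'' r) := by
    intro r hr
    have hev : deriv (fun s : ℝ => f s ^ 2) =ᶠ[nhds r] fun s => 2 * f s * f' s := by
      filter_upwards [Ioo_mem_nhds hr.1 hr.2] with x hx
      have h1 : HasDerivAt (fun s : ℝ => f s ^ 2) (2 * f x * f' x) x := by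
        have := (hA x hx).fun_pow 2
        simpa [mul_comm, mul_assoc, mul_left_comm] using this
      exact h1.deriv
    rw [hev.deriv_eq]
    have h2 : HasDerivAt (fun s => 2 * f s * f' s) (2 * (f' r ^ 2 + f r * f'' r)) r := by
      have := (((hA r hr).const_mul 2).fun_mul (hB r hr))
      refine this.congr_deriv ?_; ring
    exact h2.deriv
  have hψd : ∀ r ∈ Set.Ioo (0 : ℝ) r₁, HasDerivAt ψ
      (((m:ℝ) + 1) * r ^ m * (2 * r * f r * f' r - 2 * f r ^ 2 + 2)
        + r ^ (m + 1) * (2 * f r * f' r + 2 * r * (f' r ^ 2 + f r * f'' r)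
          - 4 * f r * f' r + 2 * r * f r * f'' r - 2 * r * f r * f'' r)) r := by
    intro r hr
    have hin : HasDerivAt (fun s => 2 * s * f s * f' s - 2 * f s ^ 2 + 2)
        (2 * f r * f' r + 2 * r * (f' r ^ 2 + f r * f'' r)
          - 4 * f r * f' r + 2 * r * f r * f'' r - 2 * r * f r * f'' r) r := by
      have h1 : HasDerivAt (fun s => 2 * s * f s * f' s)
          ((2 * 1 * f r + 2 * r * f' r) * f' r + 2 * r * f r * f'' r) r := by
        exact ((((hasDerivAt_id r).const_mul 2).fun_mul (hA r hr)).fun_mul (hB r hr))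
      have h2 : HasDerivAt (fun s => 2 * f s ^ 2) (2 * (2 * f r ^ 1 * f' r)) r :=
        ((hA r hr).fun_pow 2).const_mul 2
      have := (h1.fun_sub h2).add_const 2
      refine this.congr_deriv ?_; ring
    have := (hasDerivAt_pow (m + 1) r).fun_mul hin
    refine this.congr_deriv ?_
    push_cast
    ring
  have hfc : ContinuousOn f (Set.Ico 0 r₁) := fun x hx => (hf x hx).continuousWithinAt
  have hf'c : ContinuousOn f' (Set.Ico 0 r₁) := fun x hx => (hf' x hx).continuousWithinAt
  have hψc : ContinuousOn ψ (Set.Ico 0 r₁) := by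
    apply ContinuousOn.mul
    · exact (continuousOn_id.pow _)
    · exact ((((continuousOn_const.mul continuousOn_id).mul hfc).mul hf'c).sub
        (continuousOn_const.mul (hfc.pow 2))).add continuousOn_const
  have hmono : MonotoneOn ψ (Set.Ico 0 r₁) := by
    apply monotoneOn_of_deriv_nonneg (convex_Ico 0 r₁) hψc
    · rw [interior_Ico]
      exact fun x hx => ((hψd x hx).differentiableAt).differentiableWithinAt
    · rw [interior_Ico]
      intro r hr
      rw [(hψd r hr).deriv]
      have hE := hNCC r hr
      rw [hd2 r hr] at hE
      have hr0 : (0:ℝ) < r := hr.1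
      have hrne : r ≠ 0 := ne_of_gt hr0
      have key : ((m:ℝ) + 1) * r ^ m * (2 * r * f r * f' r - 2 * f r ^ 2 + 2)
          + r ^ (m + 1) * (2 * f r * f' r + 2 * r * (f' r ^ 2 + f r * f'' r)
            - 4 * f r * f' r + 2 * r * f r * f'' r - 2 * r * f r * f'' r)
          = 2 * r ^ (m + 2) * ((((m + 3 : ℕ) : ℝ) - 3) * f r * f' r / r
            + (1 / 2) * (2 * (f' r ^ 2 + f r * f'' r))
            + (((m + 3 : ℕ) : ℝ) - 2) * (1 - f r ^ 2) / r ^ 2) := by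
        field_simp
        push_cast
        ring
      rw [key]
      exact mul_nonneg (by positivity) hE
  intro r hr
  have hψ0 : ψ 0 = 0 := by simp [hψdef]
  have hψr : 0 ≤ ψ r := by
    rw [← hψ0]
    exact hmono ⟨le_refl 0, hr₁⟩ ⟨hr.1.le, hr.2⟩ hr.1.le
  have hr0 : (0:ℝ) < r := hr.1
  have hpow : (0:ℝ) < r ^ (m + 1) := by positivity
  simp only [hψdef] at hψr
  have hin : 0 ≤ 2 * r * f r * f' r - 2 * f r ^ 2 + 2 := by
    by_contra h
    push_neg at h
    exact absurd hψr (not_le.mpr (mul_neg_of_pos_of_neg hpow h))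
  rw [sub_nonpos, div_le_div_iff₀ (by positivity) hr0]
  nlinarith [hin, sq_nonneg r]
end

section
/- Let n ≥ 3 be an integer, 0 < r₀ < r₁, and let f : (r₀, r₁) → ℝ be a twice continuously differentiable positive function with f(r) → 0 as r → r₀⁺. Suppose that for every r ∈ (r₀, r₁) one has (n-3) f(r) f'(r)/r + (1/2)(f^2)''(r) + (n-2)(1 - f(r)^2)/r^2 ≥ 0. Then for every r ∈ (r₀, r₁) the differential inequality (f(r)^2 - 1)/r^2 - f(r) f'(r)/r ≤ 0 holds. -/
open Set Filter

/-- Case 2 of Lemma 2.1: for `n ≥ 3` and a positive `C²` function `f` on `(r₀, r₁)`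
(`0 < r₀ < r₁`) with `f(r) → 0` as `r → r₀⁺`, the null convergence condition
`(n-3) f f'/r + (1/2)(f²)'' + (n-2)(1-f²)/r² ≥ 0` on `(r₀, r₁)` implies the
differential inequality `(f² - 1)/r² - f f'/r ≤ 0` on `(r₀, r₁)`. -/
theorem ncc_implies_differential_inequality_case_two
    (n : ℕ) (hn : 3 ≤ n) (r₀ r₁ : ℝ) (hr₀ : 0 < r₀) (hr₀₁ : r₀ < r₁)
    (f f' f'' : ℝ → ℝ)
    (hf : ∀ r ∈ Set.Ioo r₀ r₁, HasDerivAt f (f' r) r)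
    (hf' : ∀ r ∈ Set.Ioo r₀ r₁, HasDerivAt f' (f'' r) r)
    (hf''cont : ContinuousOn f'' (Set.Ioo r₀ r₁))
    (hpos : ∀ r ∈ Set.Ioo r₀ r₁, 0 < f r)
    (hlim : Filter.Tendsto f (nhdsWithin r₀ (Set.Ioi r₀)) (nhds 0))
    (hNCC : ∀ r ∈ Set.Ioo r₀ r₁,
      0 ≤ ((n : ℝ) - 3) * f r * f' r / r
          + (1 / 2) * deriv (deriv (fun s : ℝ => f s ^ 2)) r
          + ((n : ℝ) - 2) * (1 - f r ^ 2) / r ^ 2) :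
    ∀ r ∈ Set.Ioo r₀ r₁,
      (f r ^ 2 - 1) / r ^ 2 - f r * f' r / r ≤ 0 := by
  obtain ⟨k, rfl⟩ : ∃ k, n = k + 3 := ⟨n - 3, by omega⟩
  set u : ℝ → ℝ := fun s => f s ^ 2 with hudef
  set u' : ℝ → ℝ := fun s => 2 * f s * f' s with hu'def
  set u'' : ℝ → ℝ := fun s => 2 * (f' s ^ 2 + f s * f'' s) with hu''def
  have hrpos : ∀ r ∈ Set.Ioo r₀ r₁, (0:ℝ) < r := fun r hr => hr₀.trans hr.1
  have hu1 : ∀ r ∈ Set.Ioo r₀ r₁, HasDerivAt u (u' r) r := by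
    intro r hr
    have h := (hf r hr).fun_pow 2
    refine h.congr_deriv ?_; symm
    simp [hu'def]
  have hu2 : ∀ r ∈ Set.Ioo r₀ r₁, HasDerivAt u' (u'' r) r := by
    intro r hr
    have h := ((hf r hr).const_mul (2:ℝ)).fun_mul (hf' r hr)
    refine h.congr_deriv ?_; symm
    simp [hu''def]; ring
  have hNCC' : ∀ r ∈ Set.Ioo r₀ r₁,
      0 ≤ (k:ℝ) * f r * f' r / r + (1/2) * u'' r + ((k:ℝ)+1) * (1 - f r ^ 2) / r ^ 2 := by
    intro r hr
    have hd : deriv (deriv u) r = u'' r := by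
      have hev : deriv u =ᶠ[nhds r] u' :=
        Filter.eventuallyEq_of_mem (isOpen_Ioo.mem_nhds hr) (fun s hs => (hu1 s hs).deriv)
      rw [hev.deriv_eq, (hu2 r hr).deriv]
    have h := hNCC r hr
    rw [hd] at h
    have e1 : ((k+3:ℕ):ℝ) - 3 = (k:ℝ) := by push_cast; ring
    have e2 : ((k+3:ℕ):ℝ) - 2 = (k:ℝ)+1 := by push_cast; ring
    rw [e1, e2] at h
    exact h
  set Φ : ℝ → ℝ := fun s => s^(k+2) * u' s + 2 * (s^(k+1) * (1 - u s)) with hΦdef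
  have hΦ : ∀ r ∈ Set.Ioo r₀ r₁,
      HasDerivAt Φ (2 * r^(k+2) * ((k:ℝ) * f r * f' r / r + (1/2) * u'' r
        + ((k:ℝ)+1) * (1 - f r ^ 2) / r ^ 2)) r := by
    intro r hr
    have hr0 : (0:ℝ) < r := hrpos r hr
    have h1 : HasDerivAt (fun s : ℝ => s^(k+2) * u' s)
        ((↑(k+2) * r^(k+1)) * u' r + r^(k+2) * u'' r) r := by
      have h := (hasDerivAt_pow (k+2) r).fun_mul (hu2 r hr)
      simpa using h
    have h2 : HasDerivAt (fun s : ℝ => 2 * (s^(k+1) * (1 - u s)))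
        (2 * ((↑(k+1) * r^k) * (1 - u r) + r^(k+1) * (0 - u' r))) r := by
      have h := (((hasDerivAt_pow (k+1) r).fun_mul
        ((hasDerivAt_const r (1:ℝ)).fun_sub (hu1 r hr)))).const_mul 2
      simpa using h
    have h3 := h1.fun_add h2
    refine h3.congr_deriv ?_; symm
    simp only [hudef, hu'def, hu''def]
    have hrne : r ≠ 0 := ne_of_gt hr0
    field_simp
    push_cast
    ring
  have hmono : MonotoneOn Φ (Set.Ioo r₀ r₁) := by
    apply monotoneOn_of_deriv_nonneg (convex_Ioo _ _)
    · exact fun r hr => (hΦ r hr).continuousAt.continuousWithinAt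
    · rw [interior_Ioo]
      exact fun r hr => (hΦ r hr).differentiableAt.differentiableWithinAt
    · rw [interior_Ioo]
      intro r hr
      rw [(hΦ r hr).deriv]
      have hr0 : (0:ℝ) < r := hrpos r hr
      exact mul_nonneg (by positivity) (hNCC' r hr)
  have hulim : Filter.Tendsto u (nhdsWithin r₀ (Set.Ioi r₀)) (nhds 0) := by
    have h := hlim.pow 2
    simpa [hudef] using h
  have key : ∀ r ∈ Set.Ioo r₀ r₁, 0 ≤ Φ r := by
    by_contra hcon
    push_neg at hcon
    obtain ⟨a, ha, hΦa⟩ := hcon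
    set c := -Φ a with hc
    have hcpos : 0 < c := by simp only [hc]; linarith
    set C := c / r₁^(k+2) with hC
    have hr₁pos : (0:ℝ) < r₁ := hr₀.trans hr₀₁
    have hCpos : 0 < C := div_pos hcpos (pow_pos hr₁pos _)
    have hev : ∀ᶠ r in nhdsWithin r₀ (Set.Ioi r₀), u r < 1/2 ∧ r ∈ Set.Ioo r₀ a := by
      have h1 : ∀ᶠ r in nhdsWithin r₀ (Set.Ioi r₀), u r < 1/2 :=
        hulim.eventually_lt_const (by norm_num)
      have h2 : ∀ᶠ r in nhdsWithin r₀ (Set.Ioi r₀), r ∈ Set.Ioo r₀ a :=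
        Filter.eventually_of_mem (Ioo_mem_nhdsGT_of_mem ⟨le_refl r₀, ha.1⟩) (fun x hx => hx)
      exact h1.and h2
    obtain ⟨δ, hδ₀, hδsub⟩ := mem_nhdsGT_iff_exists_Ioc_subset.mp hev
    obtain ⟨huδ, hδa⟩ := hδsub ⟨hδ₀, le_refl δ⟩
    have hδIoo : δ ∈ Set.Ioo r₀ r₁ := ⟨hδ₀, hδa.2.trans ha.2⟩
    have hmemIoo : ∀ r ∈ Set.Ioc r₀ δ, r ∈ Set.Ioo r₀ r₁ :=
      fun r hr => ⟨hr.1, lt_of_le_of_lt hr.2 hδIoo.2⟩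
    have hu'le : ∀ r ∈ Set.Ioc r₀ δ, u' r ≤ -C := by
      intro r hr
      obtain ⟨hur, hra⟩ := hδsub hr
      have hrIoo : r ∈ Set.Ioo r₀ r₁ := hmemIoo r hr
      have hr0 : (0:ℝ) < r := hrpos r hrIoo
      have hΦle : Φ r ≤ -c := by
        have := hmono hrIoo ha hra.2.le
        simp only [hc]; linarith
      have hΦexp : Φ r = r^(k+2) * u' r + 2 * (r^(k+1) * (1 - u r)) := rfl
      have htail : 0 ≤ 2 * (r^(k+1) * (1 - u r)) := by
        have h1u : 0 ≤ 1 - u r := by linarith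
        positivity
      have h2 : r^(k+2) * u' r ≤ -c := by
        rw [hΦexp] at hΦle; linarith
      have h3 : u' r ≤ -c / r^(k+2) := by
        rw [le_div_iff₀ (pow_pos hr0 _)]
        calc u' r * r^(k+2) = r^(k+2) * u' r := by ring
        _ ≤ -c := h2
      have h4 : -c / r^(k+2) ≤ -C := by
        rw [hC, neg_div]
        have hle : c / r₁^(k+2) ≤ c / r^(k+2) :=
          div_le_div_of_nonneg_left hcpos.le (pow_pos hr0 _)
            (pow_le_pow_left₀ hr0.le hrIoo.2.le _)
        linarith
      linarith
    set v : ℝ → ℝ := fun s => u s + C * s with hvdef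
    have hvd : ∀ r ∈ Set.Ioc r₀ δ, HasDerivAt v (u' r + C * 1) r := by
      intro r hr
      exact (hu1 r (hmemIoo r hr)).add ((hasDerivAt_id r).const_mul C)
    have hvanti : AntitoneOn v (Set.Ioc r₀ δ) := by
      apply antitoneOn_of_deriv_nonpos (convex_Ioc _ _)
      · exact fun r hr => (hvd r hr).continuousAt.continuousWithinAt
      · rw [interior_Ioc]
        exact fun r hr => (hvd r ⟨hr.1, hr.2.le⟩).differentiableAt.differentiableWithinAt
      · rw [interior_Ioc]
        intro r hr
        rw [(hvd r ⟨hr.1, hr.2.le⟩).deriv]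
        have := hu'le r ⟨hr.1, hr.2.le⟩
        linarith
    have hineq : ∀ r ∈ Set.Ioo r₀ δ, u δ + C * δ ≤ u r + C * r := by
      intro r hr
      exact hvanti ⟨hr.1, hr.2.le⟩ ⟨hδ₀, le_refl δ⟩ hr.2.le
    have hev2 : ∀ᶠ r in nhdsWithin r₀ (Set.Ioi r₀), u δ + C * δ ≤ u r + C * r := by
      filter_upwards [Ioo_mem_nhdsGT_of_mem ⟨le_refl r₀, hδ₀⟩] with r hr using hineq r hr
    have htend : Filter.Tendsto (fun r => u r + C * r) (nhdsWithin r₀ (Set.Ioi r₀))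
        (nhds (0 + C * r₀)) :=
      hulim.add (((continuous_const.mul continuous_id).tendsto r₀).mono_left nhdsWithin_le_nhds)
    have hfinal : u δ + C * δ ≤ 0 + C * r₀ := ge_of_tendsto htend hev2
    have huδpos : 0 < u δ := by
      have := hpos δ hδIoo
      simp only [hudef]
      positivity
    nlinarith [mul_lt_mul_of_pos_left (show r₀ < δ from hδ₀) hCpos]
  intro r hr
  have hΦr := key r hr
  have hr0 : (0:ℝ) < r := hrpos r hr
  have hΦexp : Φ r = r^(k+1) * (r * (2 * f r * f' r) + 2 * (1 - f r ^ 2)) := by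
    simp only [hΦdef, hudef, hu'def]
    ring
  rw [hΦexp] at hΦr
  have hpow : (0:ℝ) < r^(k+1) := pow_pos hr0 _
  have h2 : 0 ≤ r * (2 * f r * f' r) + 2 * (1 - f r ^ 2) := by
    nlinarith [hΦr, hpow]
  rw [sub_nonpos, div_le_div_iff₀ (by positivity) hr0]
  nlinarith [mul_nonneg hr0.le h2]
end

section
/- Let a, b, c, d ∈ ℂ and let (x₁, x₂, x₃) ∈ ℝ³ be a unit vector with x₃ ≠ 1. Set z = (x₁ + i·x₂)/(1 - x₃) (the stereographic coordinate). Then (|c·z + d|² + |a·z + b|²)/(1 + |z|²) = (|a|² + |b|² + |c|² + |d|²)/2 + Re(a·conj(b) + c·conj(d))·x₁ - Im(a·conj(b) + c·conj(d))·x₂ + (|a|² + |c|² - |b|² - |d|²)/2 · x₃. In particular, this function of (x₁,x₂,x₃) ∈ S² is supported in the ℓ ≤ 1 spherical modes, i.e., it is of the form a₀ + a₁x₁ + a₂x₂ + a₃x₃ for real constants a₀, a₁, a₂, a₃. -/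
set_option maxHeartbeats 1000000 in
/-- The key computation of Section 4: under stereographic projection
`z = (x₁ + i x₂)/(1 - x₃)` of the unit sphere, the conformal factor of a
fractional linear transformation with coefficients `a, b, c, d` satisfies
`(|cz+d|² + |az+b|²)/(1+|z|²)
  = (|a|²+|b|²+|c|²+|d|²)/2 + Re(a b̄ + c d̄) x₁ - Im(a b̄ + c d̄) x₂
    + (|a|²+|c|²-|b|²-|d|²)/2 · x₃`;
in particular, as a function on `S²` it is supported in the `ℓ ≤ 1` spherical
modes, i.e. of the form `a₀ + a₁ x₁ + a₂ x₂ + a₃ x₃`. -/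
theorem conformal_factor_ell_le_one_modes
    (a b c d : ℂ) (x₁ x₂ x₃ : ℝ)
    (hunit : x₁ ^ 2 + x₂ ^ 2 + x₃ ^ 2 = 1) (hx₃ : x₃ ≠ 1)
    (z : ℂ) (hz : z = ((x₁ : ℂ) + (x₂ : ℂ) * Complex.I) / (1 - (x₃ : ℂ))) :
    (‖c * z + d‖ ^ 2 + ‖a * z + b‖ ^ 2)
        / (1 + ‖z‖ ^ 2)
      = (‖a‖ ^ 2 + ‖b‖ ^ 2 + ‖c‖ ^ 2
            + ‖d‖ ^ 2) / 2
        + (a * (starRingEnd ℂ) b + c * (starRingEnd ℂ) d).re * x₁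
        - (a * (starRingEnd ℂ) b + c * (starRingEnd ℂ) d).im * x₂
        + (‖a‖ ^ 2 + ‖c‖ ^ 2 - ‖b‖ ^ 2
            - ‖d‖ ^ 2) / 2 * x₃ := by
  have ht : (1:ℝ) - x₃ ≠ 0 := sub_ne_zero.mpr (Ne.symm hx₃)
  have hzre : z.re = x₁ / (1 - x₃) := by
    rw [hz]; simp [Complex.div_re, Complex.normSq_apply]; field_simp
  have hzim : z.im = x₂ / (1 - x₃) := by
    rw [hz]; simp [Complex.div_im, Complex.normSq_apply]; field_simp
  have hsum : x₁^2 + x₂^2 = (1 - x₃) * (1 + x₃) := by nlinarith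
  have hden : 1 + (x₁/(1-x₃)*(x₁/(1-x₃)) + x₂/(1-x₃)*(x₂/(1-x₃))) = 2/(1-x₃) := by
    field_simp
    linear_combination hsum
  simp only [Complex.sq_norm, Complex.normSq_apply, Complex.add_re, Complex.add_im,
    Complex.mul_re, Complex.mul_im, Complex.conj_re, Complex.conj_im, hzre, hzim, hden]
  field_simp
  ring_nf
  linear_combination (a.re^2+a.im^2+c.re^2+c.im^2) * hsum
end
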